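/- Let M be a Kripke model and S a relation on its worlds satisfying (Sim_k) and the condition (Sim°⌢): if S w v and v R t, then either S t v, or there exists s with w R s and S t s. Then for every formula φ of the language with ⊤, ⊥, ∧, ∨ and the determinedness operator °⌢ (where w ⊩ °⌢φ iff w ⊩ φ or all R-successors of w refute φ), S w v and w ⊩ φ imply v ⊩ φ. -/
import Mathlib

inductive Fm (K : Type) : Type
  | prop (k : K)
  | top
  | bot
  | and (a b : Fm K)
  | or (a b : Fm K)
  | det (a : Fm K)

def Sat {W K : Type} (R : W → W → Prop) (P : K → W → Prop) : W → Fm K → Prop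
  | w, .prop k => P k w
  | _, .top => True
  | _, .bot => False
  | w, .and a b => Sat R P w a ∧ Sat R P w b
  | w, .or a b => Sat R P w a ∨ Sat R P w b
  | w, .det a => Sat R P w a ∨ ∀ v, R w v → ¬ Sat R P v a

theorem stmt5 {W K : Type} (R : W → W → Prop) (P : K → W → Prop)
    (S : W → W → Prop)
    (hP : ∀ k w v, S w v → P k w → P k v)
    (hOp : ∀ w v t, S w v → R v t → (S t v ∨ ∃ s, R w s ∧ S t s)) :
    ∀ (φ : Fm K) (w v : W), S w v → Sat R P w φ → Sat R P v φ := by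
  intro φ
  induction φ with
  | prop k => intro w v hS h; exact hP k w v hS h
  | top => intro _ _ _ _; trivial
  | bot => intro _ _ _ h; exact h.elim
  | and a b iha ihb => intro w v hS h; exact ⟨iha w v hS h.1, ihb w v hS h.2⟩
  | or a b iha ihb =>
      intro w v hS h
      rcases h with h | h
      · exact Or.inl (iha w v hS h)
      · exact Or.inr (ihb w v hS h)
  | det a ih =>
      intro w v hS h
      rcases h with h | h
      · exact Or.inl (ih w v hS h)
      · by_cases hv : Sat R P v a
        · exact Or.inl hv
        · refine Or.inr (fun t ht hta => ?_)
          rcases hOp w v t hS ht with hSt | ⟨s, hws, hSts⟩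
          · exact hv (ih t v hSt hta)
          · exact h s hws (ih t s hSts hta)
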